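/- Let X be a square-integrable random vector in ℝ^d, Y a square-integrable real random variable, ρ ∈ (0,1], and P ∈ {0,1}^d a mask with i.i.d. Bernoulli(ρ) entries, independent of (X, Y). Then for every θ ∈ ℝ^d, E[(Y − (P ⊙ X)^⊤θ)²] = E[(Y − ρ·X^⊤θ)²] + ρ(1−ρ)·Σ_{j=1}^d θ_j²·E[X_j²]. Consequently, inf over θ ∈ ℝ^d of E[(Y − (P ⊙ X)^⊤θ)²] = inf over θ ∈ ℝ^d of { E[(Y − X^⊤θ)²] + ((1−ρ)/ρ)·Σ_{j=1}^d θ_j²·E[X_j²] }. -/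

import Mathlib

open MeasureTheory ProbabilityTheory
open scoped ENNReal NNReal

/-- The Bernoulli distribution on `ℝ`, putting mass `ρ` at `1` and `1-ρ` at `0`. -/
noncomputable def bernoulliReal (ρ : ℝ) : Measure ℝ :=
  ENNReal.ofReal (1 - ρ) • Measure.dirac 0 + ENNReal.ofReal ρ • Measure.dirac 1

lemma bern_prob {ρ : ℝ} (h0 : 0 ≤ ρ) (h1 : ρ ≤ 1) : IsProbabilityMeasure (bernoulliReal ρ) := by
  constructor
  simp [bernoulliReal, ← ENNReal.ofReal_add (by linarith : (0:ℝ) ≤ 1 - ρ) h0]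

lemma integrable_dirac_real (f : ℝ → ℝ) (x : ℝ) : Integrable f (Measure.dirac x) := by
  refine (integrable_const (f x)).congr ?_
  rw [Filter.EventuallyEq, ae_dirac_eq]
  exact Filter.eventually_pure.2 rfl

lemma bern_integral {ρ : ℝ} (h0 : 0 ≤ ρ) (h1 : ρ ≤ 1) (f : ℝ → ℝ) :
    ∫ t, f t ∂(bernoulliReal ρ) = (1 - ρ) * f 0 + ρ * f 1 := by
  unfold bernoulliReal
  rw [integral_add_measure ((integrable_dirac_real f 0).smul_measure ENNReal.ofReal_ne_top)
      ((integrable_dirac_real f 1).smul_measure ENNReal.ofReal_ne_top),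
    integral_smul_measure, integral_smul_measure, integral_dirac, integral_dirac,
    ENNReal.toReal_ofReal (by linarith : (0:ℝ) ≤ 1 - ρ), ENNReal.toReal_ofReal h0]
  simp [smul_eq_mul]

lemma pi_moment {ρ : ℝ} {d : ℕ} (h0 : 0 ≤ ρ) (h1 : ρ ≤ 1) (f : Fin d → ℝ → ℝ) :
    ∫ p, ∏ i, f i (p i) ∂(Measure.pi fun _ : Fin d => bernoulliReal ρ)
      = ∏ i, ∫ t, f i t ∂(bernoulliReal ρ) := by
  letI : MeasureSpace ℝ := ⟨bernoulliReal ρ⟩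
  haveI : IsProbabilityMeasure (volume : Measure ℝ) := bern_prob h0 h1
  exact MeasureTheory.integral_fintype_prod_eq_prod (𝕜 := ℝ) (fun i => f i)

lemma prod_two {d : ℕ} {j k : Fin d} (hjk : j ≠ k) (g : Fin d → ℝ) :
    ∏ i, (if i = j then g i else if i = k then g i else 1) = g j * g k := by
  rw [← Finset.mul_prod_erase Finset.univ _ (Finset.mem_univ j), if_pos rfl,
      ← Finset.mul_prod_erase _ _ (Finset.mem_erase.mpr ⟨Ne.symm hjk, Finset.mem_univ k⟩),
      if_neg (Ne.symm hjk), if_pos rfl, ← mul_assoc]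
  rw [Finset.prod_eq_one, mul_one]
  intro i hi
  simp only [Finset.mem_erase, Finset.mem_univ] at hi
  rw [if_neg hi.2.1, if_neg hi.1]

lemma pi_mom_one {ρ : ℝ} {d : ℕ} (h0 : 0 ≤ ρ) (h1 : ρ ≤ 1) (j : Fin d) :
    ∫ p, p j ∂(Measure.pi fun _ : Fin d => bernoulliReal ρ) = ρ := by
  classical
  set f : Fin d → ℝ → ℝ := fun i => if i = j then (fun t => t) else (fun _ => 1) with hf
  have h : (fun p : Fin d → ℝ => p j) = fun p => ∏ i, f i (p i) := by
    funext p
    simp [hf, ite_apply, Finset.prod_ite_eq']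
  rw [h, pi_moment h0 h1 f]
  have h2 : ∀ i, ∫ t, f i t ∂(bernoulliReal ρ) = if i = j then ρ else 1 := by
    intro i
    by_cases hij : i = j <;> simp [hf, hij, bern_integral h0 h1]
  simp [h2, Finset.prod_ite_eq']

lemma pi_mom_two {ρ : ℝ} {d : ℕ} (h0 : 0 ≤ ρ) (h1 : ρ ≤ 1) (j k : Fin d) :
    ∫ p, p j * p k ∂(Measure.pi fun _ : Fin d => bernoulliReal ρ)
      = if j = k then ρ else ρ ^ 2 := by
  classical
  by_cases hjk : j = k
  · subst hjk
    set f : Fin d → ℝ → ℝ := fun i => if i = j then (fun t => t * t) else (fun _ => 1) with hf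
    have h : (fun p : Fin d → ℝ => p j * p j) = fun p => ∏ i, f i (p i) := by
      funext p
      simp [hf, ite_apply, Finset.prod_ite_eq']
    rw [h, pi_moment h0 h1 f]
    have h2 : ∀ i, ∫ t, f i t ∂(bernoulliReal ρ) = if i = j then ρ else 1 := by
      intro i
      by_cases hij : i = j <;> simp [hf, hij, bern_integral h0 h1]
    simp [h2, Finset.prod_ite_eq']
  · set f : Fin d → ℝ → ℝ :=
      fun i => if i = j then (fun t => t) else if i = k then (fun t => t) else (fun _ => 1) with hf
    have h : (fun p : Fin d → ℝ => p j * p k) = fun p => ∏ i, f i (p i) := by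
      funext p
      rw [show ∏ i, f i (p i) = ∏ i, (if i = j then p i else if i = k then p i else 1) by
        apply Finset.prod_congr rfl; intro i _; simp only [hf, ite_apply],
        prod_two hjk]
    rw [h, pi_moment h0 h1 f]
    have h2 : ∀ i, ∫ t, f i t ∂(bernoulliReal ρ)
        = if i = j then ρ else if i = k then ρ else 1 := by
      intro i
      by_cases hij : i = j
      · simp [hf, hij, bern_integral h0 h1]
      · by_cases hik : i = k <;> simp [hf, hij, hik, bern_integral h0 h1]
    rw [Finset.prod_congr rfl fun i _ => h2 i, prod_two hjk (fun _ => ρ), if_neg hjk]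
    ring

lemma expand_sq {d : ℕ} (y : ℝ) (c : Fin d → ℝ) :
    (y - ∑ j, c j) ^ 2
      = y * y - 2 * (∑ j, y * c j) + ∑ j, ∑ k, c j * c k := by
  rw [sub_sq, pow_two, pow_two, ← Finset.sum_mul_sum, mul_assoc, Finset.mul_sum]

lemma memℒp_two_mul {Ω : Type*} [MeasurableSpace Ω] {μ : Measure Ω} {f g : Ω → ℝ}
    (hf : MemLp f 2 μ) (hg : MemLp g 2 μ) : Integrable (fun ω => f ω * g ω) μ := by
  have h := hf.smul (p := 2) (q := 2) (r := 1) hg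
  · rw [memLp_one_iff_integrable] at h
    have : (fun ω => f ω * g ω) = g • f := by
      funext ω; simp [mul_comm]
    rw [this]; exact h

lemma lhs_calc {Ω : Type*} [MeasurableSpace Ω] (μ : Measure Ω) [IsProbabilityMeasure μ]
    (d : ℕ) (X : Ω → Fin d → ℝ) (Y : Ω → ℝ) (P : Ω → Fin d → ℝ)
    (intYY : Integrable (fun ω => Y ω * Y ω) μ)
    (intYX : ∀ j, Integrable (fun ω => Y ω * X ω j) μ)
    (intXX : ∀ j k, Integrable (fun ω => X ω j * X ω k) μ)
    (hPae : AEMeasurable P μ)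
    (hPbd : ∀ᵐ ω ∂μ, ∀ j, ‖P ω j‖ ≤ 1)
    (ρ : ℝ)
    (momP1 : ∀ j, ∫ ω, P ω j ∂μ = ρ)
    (momP2 : ∀ j k, ∫ ω, P ω j * P ω k ∂μ = if j = k then ρ else ρ ^ 2)
    (hindep : IndepFun (fun ω => (X ω, Y ω)) P μ) (θ : Fin d → ℝ) :
    ∫ ω, (Y ω - ∑ j, P ω j * X ω j * θ j) ^ 2 ∂μ
      = (∫ ω, Y ω * Y ω ∂μ)
        - 2 * ∑ j, θ j * ((∫ ω, Y ω * X ω j ∂μ) * ρ)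
        + ∑ j, ∑ k, (θ j * θ k) *
            ((∫ ω, X ω j * X ω k ∂μ) * (if j = k then ρ else ρ ^ 2)) := by
  classical
  have hPj : ∀ j, AEMeasurable (fun ω => P ω j) μ :=
    fun j => (measurable_pi_apply j).comp_aemeasurable hPae
  have intPright : ∀ (j : Fin d) (g : Ω → ℝ), Integrable g μ →
      Integrable (fun ω => g ω * P ω j) μ := by
    intro j g hg
    refine hg.mono (hg.aestronglyMeasurable.mul (hPj j).aestronglyMeasurable) ?_
    filter_upwards [hPbd] with ω hω
    rw [norm_mul]
    exact mul_le_of_le_one_right (norm_nonneg _) (hω j)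
  have intPPright : ∀ (j k : Fin d) (g : Ω → ℝ), Integrable g μ →
      Integrable (fun ω => g ω * (P ω j * P ω k)) μ := by
    intro j k g hg
    refine hg.mono (hg.aestronglyMeasurable.mul
      ((hPj j).mul (hPj k)).aestronglyMeasurable) ?_
    filter_upwards [hPbd] with ω hω
    rw [norm_mul, norm_mul]
    calc ‖g ω‖ * (‖P ω j‖ * ‖P ω k‖) ≤ ‖g ω‖ * 1 :=
          mul_le_mul_of_nonneg_left (mul_le_one₀ (hω j) (norm_nonneg _) (hω k)) (norm_nonneg _)
      _ = ‖g ω‖ := mul_one _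
  -- independence consequences
  have hPYX : ∀ j, ∫ ω, Y ω * X ω j * P ω j ∂μ = (∫ ω, Y ω * X ω j ∂μ) * ρ := by
    intro j
    have hφ : Measurable fun z : (Fin d → ℝ) × ℝ => z.2 * z.1 j :=
      measurable_snd.mul ((measurable_pi_apply j).comp measurable_fst)
    have hI : IndepFun (fun ω => Y ω * X ω j) (fun ω => P ω j) μ :=
      hindep.comp hφ (measurable_pi_apply j)
    have := hI.integral_fun_mul_eq_mul_integral (intYX j).aestronglyMeasurable (hPj j).aestronglyMeasurable
    rw [momP1 j] at this
    exact this
  have hXXPP : ∀ j k, ∫ ω, X ω j * X ω k * (P ω j * P ω k) ∂μ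
      = (∫ ω, X ω j * X ω k ∂μ) * (if j = k then ρ else ρ ^ 2) := by
    intro j k
    have hφ : Measurable fun z : (Fin d → ℝ) × ℝ => z.1 j * z.1 k :=
      ((measurable_pi_apply j).comp measurable_fst).mul
        ((measurable_pi_apply k).comp measurable_fst)
    have hψ : Measurable fun p : Fin d → ℝ => p j * p k :=
      (measurable_pi_apply j).mul (measurable_pi_apply k)
    have hI : IndepFun (fun ω => X ω j * X ω k) (fun ω => P ω j * P ω k) μ :=
      hindep.comp hφ hψ
    have := hI.integral_fun_mul_eq_mul_integral (intXX j k).aestronglyMeasurable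
      ((hPj j).mul (hPj k)).aestronglyMeasurable
    rw [momP2 j k] at this
    exact this
  -- pointwise expansion
  have expand : ∀ ω, (Y ω - ∑ j, P ω j * X ω j * θ j) ^ 2
      = Y ω * Y ω - 2 * (∑ j, θ j * (Y ω * X ω j * P ω j))
        + ∑ j, ∑ k, (θ j * θ k) * (X ω j * X ω k * (P ω j * P ω k)) := by
    intro ω
    rw [expand_sq]
    congr 1
    · congr 2
      exact Finset.sum_congr rfl fun j _ => by ring
    · exact Finset.sum_congr rfl fun j _ => Finset.sum_congr rfl fun k _ => by ring
  rw [show (fun ω => (Y ω - ∑ j, P ω j * X ω j * θ j) ^ 2)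
      = fun ω => Y ω * Y ω - 2 * (∑ j, θ j * (Y ω * X ω j * P ω j))
        + ∑ j, ∑ k, (θ j * θ k) * (X ω j * X ω k * (P ω j * P ω k)) from funext expand]
  have I2 : ∀ j : Fin d, Integrable (fun ω => θ j * (Y ω * X ω j * P ω j)) μ :=
    fun j => (intPright j _ (intYX j)).const_mul (θ j)
  have I2s : Integrable (fun ω => ∑ j, θ j * (Y ω * X ω j * P ω j)) μ :=
    integrable_finset_sum _ fun j _ => I2 j
  have I3 : ∀ j k : Fin d,
      Integrable (fun ω => (θ j * θ k) * (X ω j * X ω k * (P ω j * P ω k))) μ :=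
    fun j k => (intPPright j k _ (intXX j k)).const_mul _
  have I3s : Integrable
      (fun ω => ∑ j, ∑ k, (θ j * θ k) * (X ω j * X ω k * (P ω j * P ω k))) μ :=
    integrable_finset_sum _ fun j _ => integrable_finset_sum _ fun k _ => I3 j k
  have I2c : Integrable (fun ω => 2 * ∑ j, θ j * (Y ω * X ω j * P ω j)) μ :=
    I2s.const_mul 2
  have I12 : Integrable (fun ω => Y ω * Y ω
      - 2 * ∑ j, θ j * (Y ω * X ω j * P ω j)) μ := intYY.sub I2c
  rw [integral_add I12 I3s,
      integral_sub intYY I2c, integral_const_mul,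
      integral_finset_sum _ fun j _ => I2 j,
      integral_finset_sum _ fun j _ => integrable_finset_sum _ fun k _ => I3 j k]
  congr 1
  · congr 2
    exact Finset.sum_congr rfl fun j _ => by rw [integral_const_mul, hPYX j]
  · refine Finset.sum_congr rfl fun j _ => ?_
    rw [integral_finset_sum _ fun k _ => I3 j k]
    exact Finset.sum_congr rfl fun k _ => by rw [integral_const_mul, hXXPP j k]

lemma rhs_calc {Ω : Type*} [MeasurableSpace Ω] (μ : Measure Ω) [IsProbabilityMeasure μ]
    (d : ℕ) (X : Ω → Fin d → ℝ) (Y : Ω → ℝ)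
    (intYY : Integrable (fun ω => Y ω * Y ω) μ)
    (intYX : ∀ j, Integrable (fun ω => Y ω * X ω j) μ)
    (intXX : ∀ j k, Integrable (fun ω => X ω j * X ω k) μ)
    (ρ : ℝ) (θ : Fin d → ℝ) :
    ∫ ω, (Y ω - ρ * ∑ j, X ω j * θ j) ^ 2 ∂μ
      = (∫ ω, Y ω * Y ω ∂μ)
        - 2 * ∑ j, θ j * ((∫ ω, Y ω * X ω j ∂μ) * ρ)
        + ∑ j, ∑ k, (θ j * θ k) * ((∫ ω, X ω j * X ω k ∂μ) * ρ ^ 2) := by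
  classical
  have expand : ∀ ω, (Y ω - ρ * ∑ j, X ω j * θ j) ^ 2
      = Y ω * Y ω - 2 * (∑ j, θ j * (Y ω * X ω j * ρ))
        + ∑ j, ∑ k, (θ j * θ k) * (X ω j * X ω k * ρ ^ 2) := by
    intro ω
    rw [Finset.mul_sum, expand_sq]
    congr 1
    · congr 2
      exact Finset.sum_congr rfl fun j _ => by ring
    · exact Finset.sum_congr rfl fun j _ => Finset.sum_congr rfl fun k _ => by ring
  rw [show (fun ω => (Y ω - ρ * ∑ j, X ω j * θ j) ^ 2)
      = fun ω => Y ω * Y ω - 2 * (∑ j, θ j * (Y ω * X ω j * ρ))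
        + ∑ j, ∑ k, (θ j * θ k) * (X ω j * X ω k * ρ ^ 2) from funext expand]
  have I2 : ∀ j : Fin d, Integrable (fun ω => θ j * (Y ω * X ω j * ρ)) μ :=
    fun j => (((intYX j).mul_const ρ).const_mul (θ j))
  have I2s : Integrable (fun ω => ∑ j, θ j * (Y ω * X ω j * ρ)) μ :=
    integrable_finset_sum _ fun j _ => I2 j
  have I2c : Integrable (fun ω => 2 * ∑ j, θ j * (Y ω * X ω j * ρ)) μ := I2s.const_mul 2
  have I3 : ∀ j k : Fin d,
      Integrable (fun ω => (θ j * θ k) * (X ω j * X ω k * ρ ^ 2)) μ :=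
    fun j k => ((intXX j k).mul_const _).const_mul _
  have I3s : Integrable
      (fun ω => ∑ j, ∑ k, (θ j * θ k) * (X ω j * X ω k * ρ ^ 2)) μ :=
    integrable_finset_sum _ fun j _ => integrable_finset_sum _ fun k _ => I3 j k
  have I12 : Integrable (fun ω => Y ω * Y ω
      - 2 * ∑ j, θ j * (Y ω * X ω j * ρ)) μ := intYY.sub I2c
  rw [integral_add I12 I3s, integral_sub intYY I2c, integral_const_mul,
      integral_finset_sum _ fun j _ => I2 j,
      integral_finset_sum _ fun j _ => integrable_finset_sum _ fun k _ => I3 j k]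
  congr 1
  · congr 2
    exact Finset.sum_congr rfl fun j _ => by
      rw [integral_const_mul, integral_mul_const]
  · refine Finset.sum_congr rfl fun j _ => ?_
    rw [integral_finset_sum _ fun k _ => I3 j k]
    exact Finset.sum_congr rfl fun k _ => by rw [integral_const_mul, integral_mul_const]

lemma risk_algebra (d : ℕ) (ρ : ℝ) (θ a E : Fin d → ℝ) (b : Fin d → Fin d → ℝ) (cYY : ℝ)
    (hbE : ∀ j, b j j = E j) :
    cYY - 2 * ∑ j, θ j * (a j * ρ)
        + ∑ j, ∑ k, (θ j * θ k) * (b j k * (if j = k then ρ else ρ ^ 2))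
      = (cYY - 2 * ∑ j, θ j * (a j * ρ)
          + ∑ j, ∑ k, (θ j * θ k) * (b j k * ρ ^ 2))
        + ρ * (1 - ρ) * ∑ j, θ j ^ 2 * E j := by
  classical
  have key : ∀ j k : Fin d, (θ j * θ k) * (b j k * (if j = k then ρ else ρ ^ 2))
      = (θ j * θ k) * (b j k * ρ ^ 2)
        + (if k = j then ρ * (1 - ρ) * (θ j ^ 2 * E j) else 0) := by
    intro j k
    by_cases h : j = k
    · subst h
      rw [if_pos rfl, if_pos rfl, hbE j]
      ring
    · rw [if_neg h, if_neg (Ne.symm h), add_zero]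
  calc cYY - 2 * ∑ j, θ j * (a j * ρ)
        + ∑ j, ∑ k, (θ j * θ k) * (b j k * (if j = k then ρ else ρ ^ 2))
      = cYY - 2 * ∑ j, θ j * (a j * ρ)
        + (∑ j, ∑ k, ((θ j * θ k) * (b j k * ρ ^ 2)
            + (if k = j then ρ * (1 - ρ) * (θ j ^ 2 * E j) else 0))) := by
        rw [Finset.sum_congr rfl fun j _ => Finset.sum_congr rfl fun k _ => key j k]
    _ = cYY - 2 * ∑ j, θ j * (a j * ρ)
        + ((∑ j, ∑ k, (θ j * θ k) * (b j k * ρ ^ 2))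
            + ∑ j, ρ * (1 - ρ) * (θ j ^ 2 * E j)) := by
        rw [← Finset.sum_add_distrib]
        congr 1
        refine Finset.sum_congr rfl fun j _ => ?_
        rw [Finset.sum_add_distrib]
        congr 1
        simp
    _ = (cYY - 2 * ∑ j, θ j * (a j * ρ)
          + ∑ j, ∑ k, (θ j * θ k) * (b j k * ρ ^ 2))
        + ρ * (1 - ρ) * ∑ j, θ j ^ 2 * E j := by
        rw [← Finset.mul_sum]
        ring

theorem imputed_risk_decomposition
    {Ω : Type*} [MeasurableSpace Ω] (μ : Measure Ω) [IsProbabilityMeasure μ]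
    (d : ℕ) (X : Ω → Fin d → ℝ) (Y : Ω → ℝ) (P : Ω → Fin d → ℝ)
    (hX : MemLp X 2 μ) (hY : MemLp Y 2 μ)
    (ρ : ℝ) (hρ0 : 0 < ρ) (hρ1 : ρ ≤ 1)
    (hPlaw : Measure.map P μ = Measure.pi fun _ : Fin d => bernoulliReal ρ)
    (hindep : IndepFun (fun ω => (X ω, Y ω)) P μ) :
    (∀ θ : Fin d → ℝ,
      ∫ ω, (Y ω - ∑ j, P ω j * X ω j * θ j) ^ 2 ∂μ
        = (∫ ω, (Y ω - ρ * ∑ j, X ω j * θ j) ^ 2 ∂μ)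
          + ρ * (1 - ρ) * ∑ j, θ j ^ 2 * ∫ ω, X ω j ^ 2 ∂μ) ∧
    (⨅ θ : Fin d → ℝ, ∫ ω, (Y ω - ∑ j, P ω j * X ω j * θ j) ^ 2 ∂μ)
      = ⨅ θ : Fin d → ℝ,
          ((∫ ω, (Y ω - ∑ j, X ω j * θ j) ^ 2 ∂μ)
            + ((1 - ρ) / ρ) * ∑ j, θ j ^ 2 * ∫ ω, X ω j ^ 2 ∂μ) := by
  classical
  have h0 : (0:ℝ) ≤ ρ := hρ0.le
  haveI : ∀ i : Fin d, IsProbabilityMeasure (bernoulliReal ρ) := fun _ => bern_prob h0 hρ1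
  -- P is a.e.-measurable
  have hPae : AEMeasurable P μ := by
    by_contra h
    rw [Measure.map_of_not_aemeasurable h] at hPlaw
    have h1 : (Measure.pi fun _ : Fin d => bernoulliReal ρ) Set.univ = 1 := measure_univ
    rw [← hPlaw] at h1
    simp at h1
  -- moments of P
  have momP1 : ∀ j, ∫ ω, P ω j ∂μ = ρ := by
    intro j
    have := MeasureTheory.integral_map (f := fun p : Fin d → ℝ => p j) hPae
      ((measurable_pi_apply j).aestronglyMeasurable)
    rw [hPlaw] at this
    rw [← this, pi_mom_one h0 hρ1 j]
  have momP2 : ∀ j k, ∫ ω, P ω j * P ω k ∂μ = if j = k then ρ else ρ ^ 2 := by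
    intro j k
    have := MeasureTheory.integral_map (f := fun p : Fin d → ℝ => p j * p k) hPae
      (((measurable_pi_apply j).mul (measurable_pi_apply k)).aestronglyMeasurable)
    rw [hPlaw] at this
    rw [← this, pi_mom_two h0 hρ1 j k]
  -- a.e. bound on P
  have hPbd : ∀ᵐ ω ∂μ, ∀ j, ‖P ω j‖ ≤ 1 := by
    rw [MeasureTheory.ae_all_iff]
    intro j
    have hs : MeasurableSet ({0, 1} : Set ℝ) :=
      ((Set.finite_singleton (1:ℝ)).insert 0).measurableSet
    have hb : bernoulliReal ρ ({0, 1} : Set ℝ)ᶜ = 0 := by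
      simp [bernoulliReal, Measure.dirac_apply' _ hs.compl]
    have hnull : Measure.map P μ (Function.eval j ⁻¹' ({0, 1} : Set ℝ)ᶜ) = 0 := by
      rw [hPlaw]
      exact Measure.pi_eval_preimage_null _ hb
    rw [Measure.map_apply_of_aemeasurable hPae ((measurable_pi_apply j) hs.compl)] at hnull
    have : ∀ᵐ ω ∂μ, P ω j ∈ ({0, 1} : Set ℝ) := by
      rw [MeasureTheory.ae_iff]
      exact hnull
    filter_upwards [this] with ω hω
    rcases hω with h | h
    · simp [h]
    · simp only [Set.mem_singleton_iff] at h
      simp [h]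
  -- integrability
  have hXj : ∀ j, MemLp (fun ω => X ω j) 2 μ := by
    intro j
    refine MemLp.of_le hX
      ((measurable_pi_apply j).comp_aemeasurable hX.1.aemeasurable).aestronglyMeasurable ?_
    exact Filter.Eventually.of_forall fun ω => norm_le_pi_norm (X ω) j
  have intYY : Integrable (fun ω => Y ω * Y ω) μ := memℒp_two_mul hY hY
  have intYX : ∀ j, Integrable (fun ω => Y ω * X ω j) μ := fun j => memℒp_two_mul hY (hXj j)
  have intXX : ∀ j k, Integrable (fun ω => X ω j * X ω k) μ :=
    fun j k => memℒp_two_mul (hXj j) (hXj k)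
  have hbE : ∀ j, (∫ ω, X ω j * X ω j ∂μ) = ∫ ω, X ω j ^ 2 ∂μ := by
    intro j
    simp_rw [pow_two]
  -- Part 1
  have hpart1 : ∀ θ : Fin d → ℝ,
      ∫ ω, (Y ω - ∑ j, P ω j * X ω j * θ j) ^ 2 ∂μ
        = (∫ ω, (Y ω - ρ * ∑ j, X ω j * θ j) ^ 2 ∂μ)
          + ρ * (1 - ρ) * ∑ j, θ j ^ 2 * ∫ ω, X ω j ^ 2 ∂μ := by
    intro θ
    rw [lhs_calc μ d X Y P intYY intYX intXX hPae hPbd ρ momP1 momP2 hindep θ,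
        rhs_calc μ d X Y intYY intYX intXX ρ θ]
    exact risk_algebra d ρ θ (fun j => ∫ ω, Y ω * X ω j ∂μ)
      (fun j => ∫ ω, X ω j ^ 2 ∂μ) (fun j k => ∫ ω, X ω j * X ω k ∂μ)
      (∫ ω, Y ω * Y ω ∂μ) hbE
  refine ⟨hpart1, ?_⟩
  -- Part 2
  have hρ : ρ ≠ 0 := ne_of_gt hρ0
  have hsur : Function.Surjective (fun θ : Fin d → ℝ => fun j => ρ * θ j) :=
    fun y => ⟨fun j => y j / ρ, funext fun j => by field_simp⟩
  have step1 : (⨅ θ : Fin d → ℝ, ∫ ω, (Y ω - ∑ j, P ω j * X ω j * θ j) ^ 2 ∂μ)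
      = ⨅ θ : Fin d → ℝ,
          ((∫ ω, (Y ω - ∑ j, X ω j * (ρ * θ j)) ^ 2 ∂μ)
            + ((1 - ρ) / ρ) * ∑ j, (ρ * θ j) ^ 2 * ∫ ω, X ω j ^ 2 ∂μ) := by
    refine congrArg _ (funext fun θ => ?_)
    rw [hpart1 θ]
    congr 1
    · refine congrArg _ (funext fun ω => ?_)
      rw [Finset.mul_sum]
      congr 2
      exact Finset.sum_congr rfl fun j _ => by ring
    · rw [Finset.mul_sum, Finset.mul_sum]
      refine Finset.sum_congr rfl fun j _ => ?_
      field_simp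
  rw [step1, iInf, iInf]
  exact congrArg sInf (hsur.range_comp
    (fun θ' : Fin d → ℝ => (∫ ω, (Y ω - ∑ j, X ω j * θ' j) ^ 2 ∂μ)
      + ((1 - ρ) / ρ) * ∑ j, θ' j ^ 2 * ∫ ω, X ω j ^ 2 ∂μ))
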